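/- If G and H are dead-ending games, then their disjunctive sum G + H is dead-ending. -/

import Mathlib

universe u

namespace SetTheory

/-- Mathlib's (since removed) type of pre-games, restated with its old definition. -/
inductive PGame : Type (u + 1)
  | mk : ∀ α β : Type u, (α → PGame) → (β → PGame) → PGame

namespace PGame

def LeftMoves : PGame → Type u
  | mk l _ _ _ => l

def RightMoves : PGame → Type u
  | mk _ r _ _ => r

def moveLeft : ∀ g : PGame, LeftMoves g → PGame
  | mk _l _ L _ => L

def moveRight : ∀ g : PGame, RightMoves g → PGame
  | mk _ _r _ R => R

inductive IsOption : PGame → PGame → Prop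
  | moveLeft {x : PGame} (i : x.LeftMoves) : IsOption (x.moveLeft i) x
  | moveRight {x : PGame} (i : x.RightMoves) : IsOption (x.moveRight i) x

instance : Zero PGame :=
  ⟨⟨PEmpty, PEmpty, PEmpty.elim, PEmpty.elim⟩⟩

def neg : PGame → PGame
  | ⟨l, r, L, R⟩ => ⟨r, l, fun i => neg (R i), fun i => neg (L i)⟩

instance : Neg PGame :=
  ⟨neg⟩

noncomputable instance : Add PGame.{u} :=
  ⟨fun x y => by
    induction x generalizing y with | mk xl xr _ _ IHxl IHxr => _
    induction y with | mk yl yr yL yR IHyl IHyr => _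
    have y := mk yl yr yL yR
    refine ⟨xl ⊕ yl, xr ⊕ yr, Sum.rec ?_ ?_, Sum.rec ?_ ?_⟩
    · exact fun i => IHxl i y
    · exact IHyl
    · exact fun i => IHxr i y
    · exact IHyr⟩

end PGame

end SetTheory

open SetTheory

namespace Misere

/-- `F` is a follower of `G`: reachable from `G` by a (possibly empty) sequence of moves. -/
def Follower (F G : PGame) : Prop := Relation.ReflTransGen PGame.IsOption F G

def IsLeftEnd (G : PGame) : Prop := IsEmpty G.LeftMoves
def IsRightEnd (G : PGame) : Prop := IsEmpty G.RightMoves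

/-- A dead left end: every follower (including itself) is a left end. -/
def DeadLeftEnd (G : PGame) : Prop := ∀ F, Follower F G → IsLeftEnd F
def DeadRightEnd (G : PGame) : Prop := ∀ F, Follower F G → IsRightEnd F
def DeadEnd (G : PGame) : Prop := DeadLeftEnd G ∨ DeadRightEnd G

/-- A game is dead-ending if every end follower is a dead end. -/
def DeadEnding (G : PGame) : Prop :=
  ∀ F, Follower F G → (IsLeftEnd F → DeadLeftEnd F) ∧ (IsRightEnd F → DeadRightEnd F)

/-- The universe of dead-ending games. -/
def E : Set PGame := {G | DeadEnding G}

/-- `(misereWins G).1` : Left, moving first, wins `G` under misère play;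
    `(misereWins G).2` : Right, moving first, wins `G` under misère play. -/
def misereWins : PGame → Prop × Prop
  | PGame.mk l r L R =>
      (IsEmpty l ∨ ∃ i, ¬ (misereWins (L i)).2,
       IsEmpty r ∨ ∃ j, ¬ (misereWins (R j)).1)

def LeftWinsGF (G : PGame) : Prop := (misereWins G).1
def RightWinsGF (G : PGame) : Prop := (misereWins G).2

inductive MOutcome : Type
  | L | N | P | R
deriving DecidableEq

/-- Partial order on misère outcomes: `R` minimal, `L` maximal, `N` and `P` incomparable. -/
def MOutcome.le : MOutcome → MOutcome → Prop
  | .R, _ => True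
  | _, .L => True
  | a, b => a = b

instance : LE MOutcome := ⟨MOutcome.le⟩

/-- The misère outcome of a game. -/
noncomputable def outcome (G : PGame) : MOutcome := by
  classical
  exact if LeftWinsGF G then (if RightWinsGF G then .N else .L)
        else (if RightWinsGF G then .R else .P)

/-- `G ≡ H (mod U)`. -/
def equivMod (U : Set PGame) (G H : PGame) : Prop :=
  ∀ X ∈ U, outcome (G + X) = outcome (H + X)

/-- `G ≧ H (mod U)`. -/
def geMod (U : Set PGame) (G H : PGame) : Prop :=
  ∀ X ∈ U, outcome (H + X) ≤ outcome (G + X)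

/-- `LeftChain G n`: there is a sequence of `n` consecutive Left moves from `G`
ending at the zero position. -/
inductive LeftChain : PGame → ℕ → Prop
  | zero (G : PGame) : IsLeftEnd G → IsRightEnd G → LeftChain G 0
  | succ (G : PGame) (i : G.LeftMoves) (n : ℕ) :
      LeftChain (G.moveLeft i) n → LeftChain G (n + 1)

inductive RightChain : PGame → ℕ → Prop
  | zero (G : PGame) : IsLeftEnd G → IsRightEnd G → RightChain G 0
  | succ (G : PGame) (j : G.RightMoves) (n : ℕ) :
      RightChain (G.moveRight j) n → RightChain G (n + 1)

/-- Left-length: minimum number of consecutive Left moves needed to reach zero. -/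
noncomputable def leftLength (G : PGame) : ℕ := sInf {n | LeftChain G n}

/-- Right-length: minimum number of consecutive Right moves needed to reach zero. -/
noncomputable def rightLength (G : PGame) : ℕ := sInf {n | RightChain G n}

/-- Normal-play canonical form of a nonnegative integer. -/
def natGame : ℕ → PGame
  | 0 => 0
  | n + 1 => PGame.mk PUnit PEmpty (fun _ => natGame n) PEmpty.elim

/-- Normal-play canonical form of an integer (negatives are conjugates). -/
def intGame (n : ℤ) : PGame :=
  if 0 ≤ n then natGame n.toNat else -natGame (-n).toNat

/-- Normal-play canonical form of the dyadic rational `m / 2 ^ j`. -/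
def dyadicGame : ℤ → ℕ → PGame
  | m, 0 => intGame m
  | m, j + 1 =>
      if m % 2 = 0 then dyadicGame (m / 2) j
      else PGame.mk PUnit PUnit (fun _ => dyadicGame ((m - 1) / 2) j)
            (fun _ => dyadicGame ((m + 1) / 2) j)

/-- The closure of dead ends: finite disjunctive sums of dead ends. -/
def DeadEndClosure : Set PGame :=
  {G | ∃ l : List PGame, (∀ x ∈ l, DeadEnd x) ∧ G = l.sum}

end Misere

open Misere SetTheory PGame

/-! Every follower of `G + H` is a sum `G' + H'` of followers, and a sum is a left (right) end
exactly when both summands are. So an end follower of `G + H` is a sum of end followers of `G`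
and `H`, which are dead, and a sum of dead left (right) ends is again one. -/

namespace Misere

lemma isOption_add_cases {x y F : PGame} (h : IsOption F (x + y)) :
    (∃ z, IsOption z x ∧ F = z + y) ∨ (∃ z, IsOption z y ∧ F = x + z) := by
  obtain ⟨xl, xr, xL, xR⟩ := x
  obtain ⟨yl, yr, yL, yR⟩ := y
  cases h with
  | moveLeft i =>
    rcases i with j | j
    · exact .inl ⟨xL j, .moveLeft (x := mk xl xr xL xR) j, rfl⟩
    · exact .inr ⟨yL j, .moveLeft (x := mk yl yr yL yR) j, rfl⟩
  | moveRight i =>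
    rcases i with j | j
    · exact .inl ⟨xR j, .moveRight (x := mk xl xr xL xR) j, rfl⟩
    · exact .inr ⟨yR j, .moveRight (x := mk yl yr yL yR) j, rfl⟩

lemma exists_eq_add_of_follower_add {F G H : PGame} (h : Follower F (G + H)) :
    ∃ G' H', Follower G' G ∧ Follower H' H ∧ F = G' + H' := by
  induction h using Relation.ReflTransGen.head_induction_on with
  | refl => exact ⟨G, H, .refl, .refl, rfl⟩
  | head hopt _ ih =>
    obtain ⟨G', H', hG', hH', rfl⟩ := ih
    rcases isOption_add_cases hopt with ⟨z, hz, rfl⟩ | ⟨z, hz, rfl⟩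
    · exact ⟨z, H', .head hz hG', hH', rfl⟩
    · exact ⟨G', z, hG', .head hz hH', rfl⟩

lemma isLeftEnd_add_iff {x y : PGame} : IsLeftEnd (x + y) ↔ IsLeftEnd x ∧ IsLeftEnd y := by
  obtain ⟨xl, xr, xL, xR⟩ := x
  obtain ⟨yl, yr, yL, yR⟩ := y
  exact isEmpty_sum

lemma isRightEnd_add_iff {x y : PGame} : IsRightEnd (x + y) ↔ IsRightEnd x ∧ IsRightEnd y := by
  obtain ⟨xl, xr, xL, xR⟩ := x
  obtain ⟨yl, yr, yL, yR⟩ := y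
  exact isEmpty_sum

lemma DeadLeftEnd.add {G H : PGame} (hG : DeadLeftEnd G) (hH : DeadLeftEnd H) :
    DeadLeftEnd (G + H) := by
  intro F hF
  obtain ⟨G', H', hG', hH', rfl⟩ := exists_eq_add_of_follower_add hF
  exact isLeftEnd_add_iff.mpr ⟨hG G' hG', hH H' hH'⟩

lemma DeadRightEnd.add {G H : PGame} (hG : DeadRightEnd G) (hH : DeadRightEnd H) :
    DeadRightEnd (G + H) := by
  intro F hF
  obtain ⟨G', H', hG', hH', rfl⟩ := exists_eq_add_of_follower_add hF
  exact isRightEnd_add_iff.mpr ⟨hG G' hG', hH H' hH'⟩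

end Misere

/-- If G and H are dead-ending then G + H is dead-ending. -/
theorem stmt1 (G H : PGame) (hG : DeadEnding G) (hH : DeadEnding H) :
    DeadEnding (G + H) := by
  intro F hF
  obtain ⟨G', H', hG', hH', rfl⟩ := exists_eq_add_of_follower_add hF
  refine ⟨fun hend => ?_, fun hend => ?_⟩
  · obtain ⟨hGend, hHend⟩ := isLeftEnd_add_iff.mp hend
    exact ((hG G' hG').1 hGend).add ((hH H' hH').1 hHend)
  · obtain ⟨hGend, hHend⟩ := isRightEnd_add_iff.mp hend
    exact ((hG G' hG').2 hGend).add ((hH H' hH').2 hHend)
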